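/- (Duality of mixture and exponential transports) Let p, q be in the open simplex Δ°(Ω). For u with E_p[u] = 0 define the mixture transport U^m_{p,q} u = (p/q)·u (componentwise), and for w with E_q[w] = 0 define the exponential transport U^e_{q,p} w = w − E_p[w]. Then E_q[u] may be nonzero but E_q[(U^m_{p,q} u)] = E_p[u] = 0, and ⟨U^m_{p,q} u, w⟩_q = ⟨u, U^e_{q,p} w⟩_p, where ⟨a,b⟩_r = ∑_x a(x)b(x)r(x). -/
import Mathlib


/-- Duality of the mixture and exponential transports: `U^m_{p,q} u = (p/q)u`
is `q`-centred when `u` is `p`-centred, and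
`⟨U^m_{p,q} u, w⟩_q = ⟨u, U^e_{q,p} w⟩_p`. -/
theorem stmt_17 {Ω : Type*} [Fintype Ω] (p q : Ω → ℝ)
    (hp : (∀ x, 0 < p x) ∧ ∑ x, p x = 1)
    (hq : (∀ x, 0 < q x) ∧ ∑ x, q x = 1)
    (u w : Ω → ℝ)
    (hu : ∑ x, u x * p x = 0) (hw : ∑ x, w x * q x = 0) :
    (∑ x, (p x / q x * u x) * q x = 0) ∧
    (∑ x, (p x / q x * u x) * w x * q x =
      ∑ x, u x * (w x - ∑ y, w y * p y) * p x) := by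
  have hcancel : ∀ x f, p x / q x * f * q x = f * p x := by
    intro x f
    field_simp [(hq.1 x).ne']
  constructor
  · calc ∑ x, (p x / q x * u x) * q x = ∑ x, u x * p x := by
          refine Finset.sum_congr rfl fun x _ => ?_
          exact hcancel x (u x)
        _ = 0 := hu
  · have : ∀ x, (p x / q x * u x) * w x * q x = u x * w x * p x := by
      intro x
      have := hcancel x (u x * w x)
      linarith [this]
    calc ∑ x, (p x / q x * u x) * w x * q x = ∑ x, u x * w x * p x := by
          exact Finset.sum_congr rfl fun x _ => this x
      _ = ∑ x, u x * (w x - ∑ y, w y * p y) * p x := by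
          have : ∑ x, u x * (w x - ∑ y, w y * p y) * p x
              = ∑ x, u x * w x * p x - (∑ y, w y * p y) * ∑ x, u x * p x := by
            rw [Finset.mul_sum, ← Finset.sum_sub_distrib]
            refine Finset.sum_congr rfl fun x _ => ?_
            ring
          rw [this, hu, mul_zero, sub_zero]
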